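/- arXiv:1002.0733 — 2 statements merged into one kernel-verified Lean document; each statement's English description precedes it below -/
import Mathlib

section
/- Compact form of the entropic restriction for complete erasures: let A be a finite nonempty type, Q : Matrix A A ℂ Hermitian, ρ0 a density matrix on A, and b > 0. Then (Matrix.trace (exp (-b • Q))).re ≤ Real.exp (S(ρ0)) if and only if for every density matrix ρ on A, (Matrix.trace (ρ * Q)).re ≥ b⁻¹ * (S(ρ) - S(ρ0)). -/
open Matrix Kronecker
open scoped ComplexOrder

noncomputable section

/-- A density matrix: positive semidefinite with trace 1. -/
def IsDensityMatrix {ι : Type*} [Fintype ι] (ρ : Matrix ι ι ℂ) : Prop :=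
  ρ.PosSemidef ∧ ρ.trace = 1

/-- The matrix exponential. -/
noncomputable def mexp {ι : Type*} [Fintype ι] [DecidableEq ι] (M : Matrix ι ι ℂ) :
    Matrix ι ι ℂ :=
  NormedSpace.exp M

/-- Von Neumann entropy of a (Hermitian) matrix, via its eigenvalues. -/
noncomputable def vnEntropy {ι : Type*} [Fintype ι] [DecidableEq ι] (ρ : Matrix ι ι ℂ) : ℝ :=
  if h : ρ.IsHermitian then -∑ i, h.eigenvalues i * Real.log (h.eigenvalues i) else 0

/-- The Gibbs state of the Hamiltonian `H` at inverse temperature `b`. -/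
noncomputable def gibbs {ι : Type*} [Fintype ι] [DecidableEq ι] (H : Matrix ι ι ℂ) (b : ℝ) :
    Matrix ι ι ℂ :=
  (Matrix.trace (mexp (-b • H)))⁻¹ • mexp (-b • H)

/-- Equilibrium energy of the bath. -/
noncomputable def eqEnergy {ι : Type*} [Fintype ι] [DecidableEq ι] (H : Matrix ι ι ℂ) (b : ℝ) : ℝ :=
  (Matrix.trace (gibbs H b * H)).re

/-- Partial trace over the second (bath) factor. -/
def ptraceB {A B : Type*} [Fintype B] (M : Matrix (A × B) (A × B) ℂ) : Matrix A A ℂ :=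
  Matrix.of fun a a' => ∑ k : B, M (a, k) (a', k)

/-- Partial trace over the first (device) factor. -/
def ptraceA {A B : Type*} [Fintype A] (M : Matrix (A × B) (A × B) ℂ) : Matrix B B ℂ :=
  Matrix.of fun k k' => ∑ a : A, M (a, k) (a, k')

/-- The heat transfer operator of a realization setup. -/
noncomputable def hto {A B : Type*} [Fintype A] [DecidableEq A] [Fintype B] [DecidableEq B]
    (H_B : Matrix B B ℂ) (b : ℝ) (U : Matrix (A × B) (A × B) ℂ) : Matrix A A ℂ :=
  ptraceB (((1 : Matrix A A ℂ) ⊗ₖ gibbs H_B b) * Uᴴ * ((1 : Matrix A A ℂ) ⊗ₖ H_B) * U)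
    - eqEnergy H_B b • (1 : Matrix A A ℂ)

/-- Matrix logarithm of a Hermitian matrix through the continuous functional calculus. -/
noncomputable def mlog {ι : Type*} [Fintype ι] [DecidableEq ι] (ρ : Matrix ι ι ℂ) :
    Matrix ι ι ℂ :=
  if h : ρ.IsHermitian then h.cfc Real.log else 0

/-- Quantum relative entropy `S(σ‖ρ)`. -/
noncomputable def relEntropy {ι : Type*} [Fintype ι] [DecidableEq ι] (σ ρ : Matrix ι ι ℂ) : ℝ :=
  (Matrix.trace (σ * (mlog σ - mlog ρ))).re

end


/-! The free energy `S(ρ) - b tr(ρQ)` of a density matrix is at most `log tr exp(-bQ)`, with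
equality at the Gibbs state `exp(-bQ) / tr exp(-bQ)` (Gibbs variational principle); hence
`log tr exp(-bQ) ≤ S(ρ₀)` says exactly that every free energy is at most `S(ρ₀)`.

For the upper bound write `ρ = ∑ pᵢ |vᵢ⟩⟨vᵢ|` and `Q = ∑ εⱼ |wⱼ⟩⟨wⱼ|`. Then
`tr(ρQ) = ∑ pᵢ mᵢⱼ εⱼ` where `mᵢⱼ = |⟨vᵢ, wⱼ⟩|²` is doubly stochastic, and summing
`p (log y - log p) ≤ y - p` at `p = pᵢ`, `y = exp(-bεⱼ) / Z` against the weights `mᵢⱼ` gives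
`S(ρ) - b tr(ρQ) ≤ log Z`, where `Z = ∑ exp(-bεⱼ) = tr exp(-bQ)`. -/

open Real
open scoped MatrixOrder

theorem IsDensityMatrix.posSemidef {n : Type*} [Fintype n] {ρ : Matrix n n ℂ}
    (hρ : IsDensityMatrix ρ) : ρ.PosSemidef :=
  hρ.1

theorem IsDensityMatrix.isHermitian {n : Type*} [Fintype n] {ρ : Matrix n n ℂ}
    (hρ : IsDensityMatrix ρ) : ρ.IsHermitian :=
  hρ.1.1

theorem mul_log_sub_log_le_sub {p y : ℝ} (hp : 0 ≤ p) (hy : 0 < y) :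
    p * (log y - log p) ≤ y - p := by
  rcases hp.eq_or_lt with rfl | hp
  · simpa using hy.le
  rw [← log_div hy.ne' hp.ne']
  calc p * log (y / p) ≤ p * (y / p - 1) :=
        mul_le_mul_of_nonneg_left (log_le_sub_one_of_pos (div_pos hy hp)) hp.le
    _ = y - p := by field_simp

section

variable {n : Type*} [Fintype n]

theorem entropy_sub_le_log_sum_exp [DecidableEq n] {p ε : n → ℝ} {m : Matrix n n ℝ}
    (hp : ∀ i, 0 ≤ p i) (hp1 : ∑ i, p i = 1) (hm : m ∈ doublyStochastic ℝ n) :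
    -∑ i, p i * log (p i) - ∑ i, ∑ j, p i * m i j * ε j ≤ log (∑ j, exp (-ε j)) := by
  obtain ⟨hm0, hrow, hcol⟩ := mem_doublyStochastic_iff_sum.mp hm
  have : Nonempty n := by
    by_contra h
    simp [not_nonempty_iff.mp h] at hp1
  set Z := ∑ j, exp (-ε j)
  have hZ : 0 < Z := by positivity
  set q : n → ℝ := fun j => exp (-ε j) / Z
  have hq1 : ∑ j, q j = 1 := by rw [← Finset.sum_div, div_self hZ.ne']
  have hlogq (j : n) : log (q j) = -ε j - log Z := by
    rw [log_div (exp_pos _).ne' hZ.ne', log_exp]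
  have hsum : ∑ i, ∑ j, m i j * (p i * (log (q j) - log (p i))) ≤
      ∑ i, ∑ j, m i j * (q j - p i) :=
    Finset.sum_le_sum fun i _ => Finset.sum_le_sum fun j _ =>
      mul_le_mul_of_nonneg_left (mul_log_sub_log_le_sub (hp i) (div_pos (exp_pos _) hZ)) (hm0 i j)
  have hrhs : ∑ i, ∑ j, m i j * (q j - p i) = 0 := by
    simp only [mul_sub, Finset.sum_sub_distrib]
    rw [Finset.sum_comm]
    simp only [← Finset.sum_mul, hcol, mul_comm (m _ _) (p _), ← Finset.mul_sum, hrow]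
    simp [hq1, hp1]
  have hlhs : ∑ i, ∑ j, m i j * (p i * (log (q j) - log (p i))) =
      -∑ i, ∑ j, p i * m i j * ε j - log Z - ∑ i, p i * log (p i) := by
    have (i j : n) : m i j * (p i * (log (q j) - log (p i))) =
        -(p i * m i j * ε j) - (p i * log Z + p i * log (p i)) * m i j := by
      rw [hlogq]; ring
    simp only [this, Finset.sum_sub_distrib, Finset.sum_neg_distrib, ← Finset.mul_sum, hrow,
      mul_one, Finset.sum_add_distrib, ← Finset.sum_mul, hp1]
    ring
  rw [hlhs, hrhs] at hsum
  linarith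

theorem entropy_sub_eq_log_of_eq_exp_div {q ε : n → ℝ} {Z : ℝ} (hZ : 0 < Z)
    (hq : ∀ j, q j = exp (-ε j) / Z) (hq1 : ∑ j, q j = 1) :
    -∑ j, q j * log (q j) - ∑ j, q j * ε j = log Z := by
  have (j : n) : q j * log (q j) = -(q j * ε j) - q j * log Z := by
    rw [hq, log_div (exp_pos _).ne' hZ.ne', log_exp]; ring
  simp only [this, Finset.sum_sub_distrib, Finset.sum_neg_distrib, ← Finset.sum_mul, hq1]
  ring

end

section

variable {n : Type*} [Fintype n] [DecidableEq n]

namespace Matrix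

theorem sum_normSq_row_eq_one {U : Matrix n n ℂ} (hU : U * star U = 1) (i : n) :
    ∑ j, Complex.normSq (U i j) = 1 := by
  have hii := congrArg (fun M : Matrix n n ℂ => (M i i).re) hU
  simpa [mul_apply, Complex.mul_conj, ← Complex.ofReal_sum] using hii

theorem map_normSq_mem_doublyStochastic (U : unitaryGroup n ℂ) :
    (U : Matrix n n ℂ).map Complex.normSq ∈ doublyStochastic ℝ n := by
  refine mem_doublyStochastic_iff_sum.mpr ⟨fun i j => Complex.normSq_nonneg _,
    sum_normSq_row_eq_one (Unitary.coe_mul_star_self U), fun j => ?_⟩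
  simpa [star_eq_conjTranspose, Complex.normSq_conj] using
    sum_normSq_row_eq_one (U := star (U : Matrix n n ℂ)) (by simp [Unitary.coe_star_mul_self U]) j

theorem trace_diagonal_mul_diagonal_mul_conjTranspose (M : Matrix n n ℂ) (a b : n → ℝ) :
    (diagonal (fun i => (a i : ℂ)) * M * diagonal (fun j => (b j : ℂ)) * Mᴴ).trace =
      ((∑ i, ∑ j, a i * Complex.normSq (M i j) * b j : ℝ) : ℂ) := by
  push_cast
  refine Finset.sum_congr rfl fun i _ => ?_
  rw [diag_apply, mul_apply]
  refine Finset.sum_congr rfl fun j _ => ?_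
  rw [mul_diagonal, diagonal_mul, conjTranspose_apply, Complex.normSq_eq_conj_mul_self,
    Complex.star_def]
  ring

theorem trace_unitary_conj (U : unitaryGroup n ℂ) (D : Matrix n n ℂ) :
    (Unitary.conjStarAlgAut ℂ _ U D).trace = D.trace := by
  rw [Unitary.conjStarAlgAut_apply, trace_mul_cycle, Unitary.coe_star_mul_self, one_mul]

theorem trace_unitary_conj_diagonal_mul_unitary_conj_diagonal (V W : unitaryGroup n ℂ)
    (a b : n → ℝ) :
    (Unitary.conjStarAlgAut ℂ _ V (diagonal (RCLike.ofReal ∘ a)) *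
        Unitary.conjStarAlgAut ℂ _ W (diagonal (RCLike.ofReal ∘ b))).trace =
      ((∑ i, ∑ j, a i * Complex.normSq ((star V * W : unitaryGroup n ℂ) i j) * b j : ℝ) : ℂ) := by
  rw [← trace_diagonal_mul_diagonal_mul_conjTranspose,
    ← trace_unitary_conj V (diagonal _ * _ * diagonal _ * _ᴴ)]
  congr 1
  simp only [Unitary.conjStarAlgAut_apply, Submonoid.coe_mul, Unitary.coe_star,
    ← star_eq_conjTranspose, star_mul, star_star, mul_assoc, Unitary.mul_star_self_of_mem V.2,
    mul_one]
  rfl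

theorem exp_unitary_conj (U : unitaryGroup n ℂ) (D : Matrix n n ℂ) :
    NormedSpace.exp (Unitary.conjStarAlgAut ℂ _ U D) =
      Unitary.conjStarAlgAut ℂ _ U (NormedSpace.exp D) := by
  have hinv : (U : Matrix n n ℂ)⁻¹ = star (U : Matrix n n ℂ) :=
    inv_eq_left_inv (Unitary.coe_star_mul_self U)
  simp only [Unitary.conjStarAlgAut_apply, ← hinv]
  exact exp_conj _ _ Unitary.isUnit_coe

theorem posSemidef_cfc {A : Matrix n n ℂ} {f : ℝ → ℝ} (hf : ∀ x, 0 ≤ f x) :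
    (cfc f A).PosSemidef :=
  nonneg_iff_posSemidef.mp (cfc_nonneg fun x _ => hf x)

namespace IsHermitian

variable {H : Matrix n n ℂ} (hH : H.IsHermitian)
include hH

theorem trace_cfc (f : ℝ → ℝ) : (cfc f H).trace = ∑ i, (f (hH.eigenvalues i) : ℂ) := by
  rw [hH.cfc_eq, IsHermitian.cfc, trace_unitary_conj, trace_diagonal]
  rfl

theorem trace_cfc_mul_self (f : ℝ → ℝ) :
    (cfc f H * H).trace = ∑ i, ((f (hH.eigenvalues i) * hH.eigenvalues i : ℝ) : ℂ) := by
  rw [← hH.trace_cfc (fun x => f x * x), cfc_mul f (fun x => x) H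
    (finite_real_spectrum.continuousOn _) (finite_real_spectrum.continuousOn _), cfc_id' ℝ H]

theorem mexp_cfc (f : ℝ → ℝ) : mexp (cfc f H) = cfc (fun x => Real.exp (f x)) H := by
  rw [hH.cfc_eq, hH.cfc_eq, IsHermitian.cfc, IsHermitian.cfc, mexp, exp_unitary_conj,
    exp_diagonal]
  congr 2
  funext i
  simp [← Complex.exp_eq_exp_ℂ]

theorem vnEntropy_eq_neg_trace_cfc :
    vnEntropy H = -(cfc (fun x => x * Real.log x) H).trace.re := by
  rw [vnEntropy, dif_pos hH, hH.trace_cfc, ← Complex.ofReal_sum, Complex.ofReal_re]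

-- Going through a trace avoids identifying the eigenvalues of `cfc f H` with `f ∘ eigenvalues`,
-- which agree only up to reordering.
theorem vnEntropy_cfc (f : ℝ → ℝ) :
    vnEntropy (cfc f H) = -∑ i, f (hH.eigenvalues i) * Real.log (f (hH.eigenvalues i)) := by
  rw [(cfc_predicate f H).isHermitian.vnEntropy_eq_neg_trace_cfc,
    ← cfc_comp (hg := (finite_real_spectrum.image f).continuousOn _)
      (hf := finite_real_spectrum.continuousOn _),
    hH.trace_cfc, ← Complex.ofReal_sum, Complex.ofReal_re]
  rfl

theorem trace_mexp_neg_smul (b : ℝ) :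
    (mexp (-b • H)).trace = ((∑ j, Real.exp (-(b * hH.eigenvalues j)) : ℝ) : ℂ) := by
  rw [← cfc_const_mul_id (-b) H, hH.mexp_cfc, hH.trace_cfc, Complex.ofReal_sum]
  simp only [neg_mul]

theorem gibbs_eq_cfc (b : ℝ) :
    gibbs H b =
      cfc (fun x => Real.exp (-(b * x)) / ∑ j, Real.exp (-(b * hH.eigenvalues j))) H := by
  simp_rw [gibbs, hH.trace_mexp_neg_smul, div_eq_inv_mul]
  rw [cfc_const_mul _ _ _ (finite_real_spectrum.continuousOn _), ← Complex.ofReal_inv,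
    Complex.coe_smul, ← cfc_const_mul_id (-b) H, hH.mexp_cfc]
  simp only [neg_mul]

theorem isDensityMatrix_gibbs [Nonempty n] (b : ℝ) : IsDensityMatrix (gibbs H b) := by
  have hZ : 0 < ∑ j, Real.exp (-(b * hH.eigenvalues j)) := by positivity
  rw [hH.gibbs_eq_cfc]
  refine ⟨posSemidef_cfc fun x => by positivity, ?_⟩
  rw [hH.trace_cfc, ← Complex.ofReal_sum, ← Finset.sum_div, div_self hZ.ne', Complex.ofReal_one]

theorem vnEntropy_gibbs_sub_mul_re_trace_mul [Nonempty n] (b : ℝ) :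
    vnEntropy (gibbs H b) - b * (gibbs H b * H).trace.re = log (mexp (-b • H)).trace.re := by
  have hZ : 0 < ∑ j, Real.exp (-(b * hH.eigenvalues j)) := by positivity
  rw [hH.gibbs_eq_cfc, hH.vnEntropy_cfc, hH.trace_cfc_mul_self, hH.trace_mexp_neg_smul,
    ← Complex.ofReal_sum, Complex.ofReal_re, Complex.ofReal_re, Finset.mul_sum]
  convert entropy_sub_eq_log_of_eq_exp_div (ε := fun j => b * hH.eigenvalues j) hZ
    (fun j => rfl) (by rw [← Finset.sum_div, div_self hZ.ne']) using 3
  ring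

end IsHermitian

end Matrix

namespace IsDensityMatrix

variable {ρ : Matrix n n ℂ} (hρ : IsDensityMatrix ρ)
include hρ

theorem sum_eigenvalues : ∑ i, hρ.isHermitian.eigenvalues i = 1 := by
  have h := hρ.isHermitian.trace_eq_sum_eigenvalues
  rw [hρ.2] at h
  simpa using congrArg Complex.re h.symm

theorem vnEntropy_sub_mul_re_trace_mul_le {H : Matrix n n ℂ} (hH : H.IsHermitian) (b : ℝ) :
    vnEntropy ρ - b * (ρ * H).trace.re ≤ log (∑ j, exp (-(b * hH.eigenvalues j))) := by
  set U := star hρ.isHermitian.eigenvectorUnitary * hH.eigenvectorUnitary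
  have htrace : (ρ * H).trace.re = ∑ i, ∑ j,
      hρ.isHermitian.eigenvalues i * Complex.normSq (U i j) * hH.eigenvalues j := by
    conv_lhs => rw [hρ.isHermitian.spectral_theorem, hH.spectral_theorem]
    rw [trace_unitary_conj_diagonal_mul_unitary_conj_diagonal, Complex.ofReal_re]
  have := entropy_sub_le_log_sum_exp (ε := fun j => b * hH.eigenvalues j)
    hρ.posSemidef.eigenvalues_nonneg hρ.sum_eigenvalues (map_normSq_mem_doublyStochastic U)
  rw [vnEntropy, dif_pos hρ.isHermitian, htrace]
  convert this using 3
  simp only [Finset.mul_sum, map_apply]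
  exact Finset.sum_congr rfl fun i _ => Finset.sum_congr rfl fun j _ => by ring

end IsDensityMatrix

end

theorem Matrix.IsHermitian.isGreatest_vnEntropy_sub_mul_re_trace_mul {n : Type*} [Fintype n]
    [DecidableEq n] [Nonempty n] {H : Matrix n n ℂ} (hH : H.IsHermitian) (b : ℝ) :
    IsGreatest {x | ∃ ρ, IsDensityMatrix ρ ∧ vnEntropy ρ - b * (ρ * H).trace.re = x}
      (log (mexp (-b • H)).trace.re) := by
  refine ⟨⟨gibbs H b, hH.isDensityMatrix_gibbs b, hH.vnEntropy_gibbs_sub_mul_re_trace_mul b⟩, ?_⟩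
  rintro _ ⟨ρ, hρ, rfl⟩
  rw [hH.trace_mexp_neg_smul, Complex.ofReal_re]
  exact hρ.vnEntropy_sub_mul_re_trace_mul_le hH b

theorem compact_entropic_restriction_complete_erasure_general
    {A : Type*} [Fintype A] [DecidableEq A] [Nonempty A]
    (Q : Matrix A A ℂ) (hQ : Q.IsHermitian)
    (ρ0 : Matrix A A ℂ)
    {b : ℝ} (hb : 0 < b) :
    (Matrix.trace (mexp (-b • Q))).re ≤ Real.exp (vnEntropy ρ0) ↔
      ∀ ρ : Matrix A A ℂ, IsDensityMatrix ρ →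
        (Matrix.trace (ρ * Q)).re ≥ b⁻¹ * (vnEntropy ρ - vnEntropy ρ0) := by
  have hZ : 0 < (mexp (-b • Q)).trace.re := by
    rw [hQ.trace_mexp_neg_smul, Complex.ofReal_re]
    positivity
  rw [← log_le_iff_le_exp hZ, isLUB_le_iff (hQ.isGreatest_vnEntropy_sub_mul_re_trace_mul b).isLUB]
  simp only [mem_upperBounds, Set.mem_ofPred_eq, forall_exists_index, and_imp,
    forall_apply_eq_imp_iff₂]
  refine forall₂_congr fun ρ _ => ?_
  rw [ge_iff_le, inv_mul_le_iff₀ hb, sub_le_comm]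

/-- Compact form of the entropic restriction for complete erasures. -/
theorem compact_entropic_restriction_complete_erasure
    {A : Type*} [Fintype A] [DecidableEq A] [Nonempty A]
    (Q : Matrix A A ℂ) (hQ : Q.IsHermitian)
    (ρ0 : Matrix A A ℂ) (hρ0 : IsDensityMatrix ρ0)
    {b : ℝ} (hb : 0 < b) :
    (Matrix.trace (mexp (-b • Q))).re ≤ Real.exp (vnEntropy ρ0) ↔
      ∀ ρ : Matrix A A ℂ, IsDensityMatrix ρ →
        (Matrix.trace (ρ * Q)).re ≥ b⁻¹ * (vnEntropy ρ - vnEntropy ρ0) :=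
  compact_entropic_restriction_complete_erasure_general Q hQ ρ0 hb
end

section
/- Convexity of the set of (operation, HTO) pairs via a controller system: fix finite nonempty types A and B, a Hermitian H_B : Matrix B B ℂ, and b > 0, with Gibbs state ρ_B. Let n ≥ 1, and for each i : Fin n let U_i : Matrix (A × B) (A × B) ℂ satisfy U_iᴴ * U_i = 1, with heat transfer operator Q_i. Let λ : Fin n → ℝ with λ i > 0 for all i and ∑ i, λ i = 1, set C = Fin n, H_C = Matrix.diagonal (fun i => (-b⁻¹ * Real.log (λ i) : ℂ)), and H_BC = H_B ⊗ₖ 1 + 1 ⊗ₖ H_C on B × C. Then: (a) the Gibbs state of H_BC at inverse temperature b equals ρ_B ⊗ₖ Matrix.diagonal (fun i => (λ i : ℂ)); (b) the matrix V on A × (B × C) obtained from ∑ i, U_i ⊗ₖ Matrix.stdBasisMatrix i i 1 via the natural reindexing (A × B) × C ≃ A × (B × C) satisfies Vᴴ * V = 1; (c) for every density matrix ρ on A, tr_{B×C} (V * (ρ ⊗ₖ (ρ_B ⊗ₖ Matrix.diagonal (fun i => (λ i : ℂ)))) * Vᴴ) = ∑ i, (λ i : ℂ) • tr_B (U_i *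 (ρ ⊗ₖ ρ_B) * U_iᴴ); and (d) the heat transfer operator of the realization setup (A, B × C, H_BC, b, V) equals ∑ i, (λ i : ℂ) • Q_i. -/
open Matrix Kronecker
open scoped ComplexOrder

/-! The controller Hamiltonian is diagonal with Gibbs weights `l i`, and `H_B ⊗ 1` commutes with
`1 ⊗ H_C`, so the joint Gibbs state factorises as `ρ_B ⊗ diag l`. The isometry `V`, the joint
state and the joint Hamiltonian are all block diagonal in the controller index, so their products
are computed block by block, and tracing out the controller turns them into `l`-weighted sums over
the blocks. In the heat transfer operator the controller energy `∑ i, l i * (-b⁻¹ * log (l i))`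
enters once through the partial trace and once through the equilibrium energy, and cancels. -/

open NormedSpace

namespace Matrix

theorem sum_kronecker_single_eq_blockDiagonal {m n o α : Type*} [Fintype o] [DecidableEq o]
    [Semiring α] (M : o → Matrix m n α) :
    ∑ i, M i ⊗ₖ single i i (1 : α) = blockDiagonal M := by
  ext ⟨x, i⟩ ⟨y, j⟩
  simp [Matrix.sum_apply, blockDiagonal_apply, single_apply, ite_and, eq_comm]

variable {m n : Type*} [Fintype m] [DecidableEq m] [Fintype n] [DecidableEq n]

/-- `NormedSpace.exp` only depends on the topology, but `map_exp` is stated for normed algebras; the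
`l∞`-operator norm supplies one inducing the product topology. -/
theorem exp_map_ringHom (f : Matrix m m ℂ →+* Matrix n n ℂ) (hf : Continuous f)
    (M : Matrix m m ℂ) : exp (f M) = f (exp M) := by
  let _ : NormedRing (Matrix m m ℂ) := Matrix.linftyOpNormedRing
  let _ : NormedRing (Matrix n n ℂ) := Matrix.linftyOpNormedRing
  let _ : NormedAlgebra ℂ (Matrix m m ℂ) := Matrix.linftyOpNormedAlgebra
  let _ : NormedAlgebra ℂ (Matrix n n ℂ) := Matrix.linftyOpNormedAlgebra
  let _ : NormedAlgebra ℚ (Matrix m m ℂ) := Matrix.linftyOpNormedAlgebra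
  let _ : NormedAlgebra ℚ (Matrix n n ℂ) := Matrix.linftyOpNormedAlgebra
  exact (map_exp f hf M).symm

theorem exp_kronecker_one (M : Matrix m m ℂ) :
    exp (M ⊗ₖ (1 : Matrix n n ℂ)) = exp M ⊗ₖ 1 := by
  simp only [kronecker_one]
  exact exp_map_ringHom ((blockDiagonalRingHom m n ℂ).comp (Pi.constRingHom n _))
    (continuous_id.matrix_blockDiagonal.comp (continuous_pi fun _ => continuous_id)) M

theorem exp_one_kronecker (M : Matrix n n ℂ) :
    exp ((1 : Matrix m m ℂ) ⊗ₖ M) = 1 ⊗ₖ exp M := by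
  simp only [one_kronecker]
  exact exp_map_ringHom (((reindexRingEquiv ℂ (Equiv.prodComm n m)).toRingHom).comp
      ((blockDiagonalRingHom n m ℂ).comp (Pi.constRingHom m _)))
    ((continuous_id.matrix_reindex _ _).comp
      (continuous_id.matrix_blockDiagonal.comp (continuous_pi fun _ => continuous_id))) M

theorem exp_kronecker_one_add_one_kronecker (X : Matrix m m ℂ) (Y : Matrix n n ℂ) :
    exp (X ⊗ₖ (1 : Matrix n n ℂ) + (1 : Matrix m m ℂ) ⊗ₖ Y) = exp X ⊗ₖ exp Y := by
  have hXY : Commute (X ⊗ₖ (1 : Matrix n n ℂ)) ((1 : Matrix m m ℂ) ⊗ₖ Y) := by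
    simp only [Commute, SemiconjBy, ← mul_kronecker_mul, mul_one, one_mul]
  rw [exp_add_of_commute _ _ hXY, exp_kronecker_one, exp_one_kronecker, ← mul_kronecker_mul,
    mul_one, one_mul]

theorem trace_exp_ne_zero [Nonempty m] {M : Matrix m m ℂ} (hM : M.IsHermitian) :
    (exp M).trace ≠ 0 := by
  set N := (2⁻¹ : ℂ) • M
  have hN : Nᴴ = N := by simp [N, conjTranspose_smul, hM.eq]
  have hsq : exp M = (exp N)ᴴ * exp N := by
    rw [← exp_conjTranspose, hN, ← exp_add_of_commute _ _ (Commute.refl N), ← add_smul,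
      ← two_mul, mul_inv_cancel₀ two_ne_zero, one_smul]
  rw [hsq, Ne, trace_conjTranspose_mul_self_eq_zero_iff]
  exact (isUnit_exp N).ne_zero

theorem exp_diagonal_complex (v : m → ℂ) :
    exp (diagonal v) = diagonal fun i => Complex.exp (v i) := by
  rw [exp_diagonal, Pi.exp_def]
  simp only [Complex.exp_eq_exp_ℂ]

end Matrix

section Gibbs

variable {m n : Type*} [Fintype m] [DecidableEq m] [Fintype n] [DecidableEq n]

theorem trace_gibbs [Nonempty m] {H : Matrix m m ℂ} (hH : H.IsHermitian) (b : ℝ) :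
    (gibbs H b).trace = 1 := by
  rw [gibbs, trace_smul, smul_eq_mul]
  exact inv_mul_cancel₀ (trace_exp_ne_zero (hH.smul (IsSelfAdjoint.all (-b))))

theorem gibbs_kronecker_one_add_one_kronecker (H : Matrix m m ℂ) (K : Matrix n n ℂ) (b : ℝ) :
    gibbs (H ⊗ₖ (1 : Matrix n n ℂ) + (1 : Matrix m m ℂ) ⊗ₖ K) b = gibbs H b ⊗ₖ gibbs K b := by
  rw [gibbs, gibbs, gibbs, mexp, mexp, mexp, smul_add, ← smul_kronecker, ← kronecker_smul,
    exp_kronecker_one_add_one_kronecker, trace_kronecker, mul_inv, smul_kronecker,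
    kronecker_smul, smul_smul, mul_comm]

theorem eqEnergy_kronecker_one_add_one_kronecker {H : Matrix m m ℂ} {K : Matrix n n ℂ} {b : ℝ}
    (hH : (gibbs H b).trace = 1) (hK : (gibbs K b).trace = 1) :
    eqEnergy (H ⊗ₖ (1 : Matrix n n ℂ) + (1 : Matrix m m ℂ) ⊗ₖ K) b =
      eqEnergy H b + eqEnergy K b := by
  rw [eqEnergy, gibbs_kronecker_one_add_one_kronecker, mul_add, ← mul_kronecker_mul,
    ← mul_kronecker_mul, mul_one, mul_one, trace_add, trace_kronecker, trace_kronecker, hH, hK,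
    mul_one, one_mul, Complex.add_re, eqEnergy, eqEnergy]

theorem gibbs_diagonal_neg_inv_mul_log {l : n → ℝ} (hl : ∀ i, 0 < l i) (hlsum : ∑ i, l i = 1)
    {b : ℝ} (hb : b ≠ 0) :
    gibbs (diagonal fun i => ((-b⁻¹ * Real.log (l i) : ℝ) : ℂ)) b =
      diagonal fun i => (l i : ℂ) := by
  have hexp : mexp (-b • diagonal fun i => ((-b⁻¹ * Real.log (l i) : ℝ) : ℂ)) =
      diagonal fun i => (l i : ℂ) := by
    rw [mexp, ← diagonal_smul, exp_diagonal_complex]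
    congr 1
    funext i
    rw [Pi.smul_apply, Complex.real_smul, ← Complex.ofReal_mul, ← Complex.ofReal_exp,
      show -b * (-b⁻¹ * Real.log (l i)) = Real.log (l i) by field_simp, Real.exp_log (hl i)]
  rw [gibbs, hexp, trace_diagonal, ← Complex.ofReal_sum, hlsum, Complex.ofReal_one, inv_one,
    one_smul]

end Gibbs

section PartialTrace

variable {A B : Type*} [Fintype B]

theorem ptraceB_add (M N : Matrix (A × B) (A × B) ℂ) :
    ptraceB (M + N) = ptraceB M + ptraceB N := by
  ext a a'
  simp [ptraceB, Finset.sum_add_distrib]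

theorem ptraceB_smul (c : ℂ) (M : Matrix (A × B) (A × B) ℂ) :
    ptraceB (c • M) = c • ptraceB M := by
  ext a a'
  simp [ptraceB, Finset.mul_sum]

theorem ptraceB_kronecker (M : Matrix A A ℂ) (N : Matrix B B ℂ) :
    ptraceB (M ⊗ₖ N) = N.trace • M := by
  ext a a'
  simp [ptraceB, Matrix.trace, Finset.mul_sum, mul_comm]

end PartialTrace

section Controlled

variable {A B C : Type*} [Fintype A] [DecidableEq A] [Fintype B] [DecidableEq B]
  [Fintype C] [DecidableEq C]

/-- The controlled operation `∑ i, M i ⊗ₖ |i⟩⟨i|`, regrouped as a matrix on `A × (B × C)`. -/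
def controlled : (C → Matrix (A × B) (A × B) ℂ) →+* Matrix (A × B × C) (A × B × C) ℂ :=
  (reindexRingEquiv ℂ (Equiv.prodAssoc A B C)).toRingHom.comp
    (blockDiagonalRingHom (A × B) C ℂ)

theorem controlled_apply (M : C → Matrix (A × B) (A × B) ℂ) :
    controlled M = reindex (Equiv.prodAssoc A B C) (Equiv.prodAssoc A B C) (blockDiagonal M) :=
  rfl

theorem controlled_conjTranspose (M : C → Matrix (A × B) (A × B) ℂ) :
    (controlled M)ᴴ = controlled fun i => (M i)ᴴ := by
  rw [controlled_apply, controlled_apply, conjTranspose_reindex, blockDiagonal_conjTranspose]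

theorem kronecker_kronecker_diagonal (X : Matrix A A ℂ) (Y : Matrix B B ℂ) (d : C → ℂ) :
    X ⊗ₖ (Y ⊗ₖ diagonal d) = controlled fun i => d i • (X ⊗ₖ Y) := by
  rw [← kronecker_assoc, kronecker_diagonal, controlled_apply]
  simp only [op_smul_eq_smul]

theorem ptraceB_controlled (M : C → Matrix (A × B) (A × B) ℂ) :
    ptraceB (controlled M) = ∑ i, ptraceB (M i) := by
  ext a a'
  simp only [controlled_apply, ptraceB, reindex_apply, submatrix_apply, Equiv.prodAssoc_symm_apply,
    blockDiagonal_apply, of_apply, Fintype.sum_prod_type, Matrix.sum_apply, ite_true]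
  exact Finset.sum_comm

theorem controlled_conjTranspose_mul_self {U : C → Matrix (A × B) (A × B) ℂ}
    (hU : ∀ i, (U i)ᴴ * U i = 1) : (controlled U)ᴴ * controlled U = 1 := by
  rw [controlled_conjTranspose, ← map_mul, ← map_one controlled]
  exact congrArg controlled (funext hU)

theorem ptraceB_controlled_mul_kronecker_mul (U : C → Matrix (A × B) (A × B) ℂ)
    (ρ : Matrix A A ℂ) (σ : Matrix B B ℂ) (p : C → ℂ) :
    ptraceB (controlled U * (ρ ⊗ₖ (σ ⊗ₖ diagonal p)) * (controlled U)ᴴ) =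
      ∑ i, p i • ptraceB (U i * (ρ ⊗ₖ σ) * (U i)ᴴ) := by
  rw [kronecker_kronecker_diagonal, controlled_conjTranspose, ← map_mul, ← map_mul,
    ptraceB_controlled]
  simp only [Pi.mul_apply, mul_smul_comm, smul_mul_assoc, ptraceB_smul]

theorem hto_controlled {H : Matrix B B ℂ} {b : ℝ} (hH : (gibbs H b).trace = 1) {h p : C → ℝ}
    (hp : gibbs (diagonal fun i => (h i : ℂ)) b = diagonal fun i => (p i : ℂ))
    (hpsum : ∑ i, p i = 1) {U : C → Matrix (A × B) (A × B) ℂ} (hU : ∀ i, (U i)ᴴ * U i = 1) :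
    hto (H ⊗ₖ (1 : Matrix C C ℂ) + (1 : Matrix B B ℂ) ⊗ₖ diagonal fun i => (h i : ℂ)) b
        (controlled U) = ∑ i, (p i : ℂ) • hto H b (U i) := by
  set K : Matrix C C ℂ := diagonal fun i => (h i : ℂ)
  have hK : (gibbs K b).trace = 1 := by
    rw [hp, trace_diagonal]; exact_mod_cast hpsum
  have hEK : eqEnergy K b = ∑ i, p i * h i := by
    simp [eqEnergy, hp, K, diagonal_mul_diagonal, trace_diagonal, Complex.re_sum]
  have hstate : (1 : Matrix A A ℂ) ⊗ₖ gibbs (H ⊗ₖ 1 + 1 ⊗ₖ K) b =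
      controlled fun i => (p i : ℂ) • ((1 : Matrix A A ℂ) ⊗ₖ gibbs H b) := by
    rw [gibbs_kronecker_one_add_one_kronecker, hp, kronecker_kronecker_diagonal]
  have hham : (1 : Matrix A A ℂ) ⊗ₖ (H ⊗ₖ (1 : Matrix C C ℂ) + 1 ⊗ₖ K) =
      controlled fun i => (1 : Matrix A A ℂ) ⊗ₖ H + (h i : ℂ) • 1 := by
    rw [kronecker_add, ← diagonal_one (n := C), kronecker_kronecker_diagonal,
      kronecker_kronecker_diagonal, one_kronecker_one, ← map_add]
    simp only [one_smul, Pi.add_def]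
  have hconj : (1 : Matrix A A ℂ) ⊗ₖ gibbs (H ⊗ₖ 1 + 1 ⊗ₖ K) b * (controlled U)ᴴ *
      ((1 : Matrix A A ℂ) ⊗ₖ (H ⊗ₖ 1 + 1 ⊗ₖ K)) * controlled U =
      controlled fun i => (p i : ℂ) • ((1 ⊗ₖ gibbs H b) * (U i)ᴴ * (1 ⊗ₖ H) * U i) +
        ((p i * h i : ℝ) : ℂ) • ((1 : Matrix A A ℂ) ⊗ₖ gibbs H b) := by
    rw [hstate, hham, controlled_conjTranspose, ← map_mul, ← map_mul, ← map_mul]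
    congr 1
    funext i
    simp only [Pi.mul_apply, mul_add, add_mul, smul_mul_assoc, mul_smul_comm, mul_assoc, hU i,
      mul_one, smul_smul, mul_comm (h i : ℂ), Complex.ofReal_mul]
  rw [hto, hconj, ptraceB_controlled, eqEnergy_kronecker_one_add_one_kronecker hH hK, hEK]
  simp only [ptraceB_add, ptraceB_smul, ptraceB_kronecker, hH, one_smul, hto]
  simp only [Complex.coe_smul, smul_sub, Finset.sum_add_distrib, Finset.sum_sub_distrib,
    ← Finset.sum_smul, hpsum, one_smul, add_smul]
  abel

end Controlled

theorem convexity_via_controller_general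
    {A B : Type*} [Fintype A] [DecidableEq A]
    [Fintype B] [DecidableEq B] [Nonempty B]
    (H_B : Matrix B B ℂ) (hH : H_B.IsHermitian) {b : ℝ} (hb : 0 < b)
    (n : ℕ)
    (U : Fin n → Matrix (A × B) (A × B) ℂ) (hU : ∀ i, (U i)ᴴ * U i = 1)
    (l : Fin n → ℝ) (hl : ∀ i, 0 < l i) (hlsum : ∑ i, l i = 1)
    (H_C : Matrix (Fin n) (Fin n) ℂ)
    (hHC : H_C = Matrix.diagonal (fun i => ((-b⁻¹ * Real.log (l i) : ℝ) : ℂ)))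
    (H_BC : Matrix (B × Fin n) (B × Fin n) ℂ)
    (hHBC : H_BC = H_B ⊗ₖ (1 : Matrix (Fin n) (Fin n) ℂ) + (1 : Matrix B B ℂ) ⊗ₖ H_C)
    (V : Matrix (A × B × Fin n) (A × B × Fin n) ℂ)
    (hV : V = Matrix.reindex (Equiv.prodAssoc A B (Fin n)) (Equiv.prodAssoc A B (Fin n))
      (∑ i, U i ⊗ₖ Matrix.single i i (1 : ℂ))) :
    gibbs H_BC b = gibbs H_B b ⊗ₖ Matrix.diagonal (fun i => (l i : ℂ)) ∧
    Vᴴ * V = 1 ∧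
    (∀ ρ : Matrix A A ℂ, IsDensityMatrix ρ →
      ptraceB (V * (ρ ⊗ₖ (gibbs H_B b ⊗ₖ Matrix.diagonal (fun i => (l i : ℂ)))) * Vᴴ) =
        ∑ i, (l i : ℂ) • ptraceB (U i * (ρ ⊗ₖ gibbs H_B b) * (U i)ᴴ)) ∧
    hto H_BC b V = ∑ i, (l i : ℂ) • hto H_B b (U i) := by
  have hgibbsC : gibbs H_C b = diagonal fun i => (l i : ℂ) :=
    hHC ▸ gibbs_diagonal_neg_inv_mul_log hl hlsum hb.ne'
  have hVU : V = controlled U := by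
    rw [hV, sum_kronecker_single_eq_blockDiagonal, controlled_apply]
  subst hVU
  refine ⟨?_, controlled_conjTranspose_mul_self hU,
    fun ρ _ => ptraceB_controlled_mul_kronecker_mul U ρ _ _, ?_⟩
  · rw [hHBC, gibbs_kronecker_one_add_one_kronecker, hgibbsC]
  · subst hHBC hHC
    exact hto_controlled (trace_gibbs hH b) hgibbsC hlsum hU

/-- Convexity of the set of (operation, HTO) pairs via a controller system. -/
theorem convexity_via_controller
    {A B : Type*} [Fintype A] [DecidableEq A] [Nonempty A]
    [Fintype B] [DecidableEq B] [Nonempty B]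
    (H_B : Matrix B B ℂ) (hH : H_B.IsHermitian) {b : ℝ} (hb : 0 < b)
    (n : ℕ) (hn : 1 ≤ n)
    (U : Fin n → Matrix (A × B) (A × B) ℂ) (hU : ∀ i, (U i)ᴴ * U i = 1)
    (l : Fin n → ℝ) (hl : ∀ i, 0 < l i) (hlsum : ∑ i, l i = 1)
    (H_C : Matrix (Fin n) (Fin n) ℂ)
    (hHC : H_C = Matrix.diagonal (fun i => ((-b⁻¹ * Real.log (l i) : ℝ) : ℂ)))
    (H_BC : Matrix (B × Fin n) (B × Fin n) ℂ)
    (hHBC : H_BC = H_B ⊗ₖ (1 : Matrix (Fin n) (Fin n) ℂ) + (1 : Matrix B B ℂ) ⊗ₖ H_C)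
    (V : Matrix (A × B × Fin n) (A × B × Fin n) ℂ)
    (hV : V = Matrix.reindex (Equiv.prodAssoc A B (Fin n)) (Equiv.prodAssoc A B (Fin n))
      (∑ i, U i ⊗ₖ Matrix.single i i (1 : ℂ))) :
    gibbs H_BC b = gibbs H_B b ⊗ₖ Matrix.diagonal (fun i => (l i : ℂ)) ∧
    Vᴴ * V = 1 ∧
    (∀ ρ : Matrix A A ℂ, IsDensityMatrix ρ →
      ptraceB (V * (ρ ⊗ₖ (gibbs H_B b ⊗ₖ Matrix.diagonal (fun i => (l i : ℂ)))) * Vᴴ) =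
        ∑ i, (l i : ℂ) • ptraceB (U i * (ρ ⊗ₖ gibbs H_B b) * (U i)ᴴ)) ∧
    hto H_BC b V = ∑ i, (l i : ℂ) • hto H_B b (U i) :=
  convexity_via_controller_general H_B hH hb n U hU l hl hlsum H_C hHC H_BC hHBC V hV
end
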